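/- In the ring R = F_11[x, y]/(y² - x³ - x), the element x is not a square: there is no f ∈ R with f² = x. -/
import Mathlib


open MvPolynomial

/-- in `R = 𝔽₁₁[x,y]/(y² - x³ - x)`, the element `x` is not a square. -/
theorem x_not_square_in_coordinate_ring :
    ¬ ∃ f : MvPolynomial (Fin 2) (ZMod 11) ⧸
        Ideal.span {(X 1 : MvPolynomial (Fin 2) (ZMod 11)) ^ 2 - X 0 ^ 3 - X 0},
      f ^ 2 = Ideal.Quotient.mk _ (X 0) := by
  rintro ⟨f, hf⟩
  obtain ⟨p, rfl⟩ := Ideal.Quotient.mk_surjective f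
  rw [← map_pow, Ideal.Quotient.eq, Ideal.mem_span_singleton] at hf
  obtain ⟨q, hq⟩ := hf
  have h := congrArg (MvPolynomial.eval
    (fun i : Fin 2 => if i = 0 then (7 : ZMod 11) else 3)) hq
  simp only [map_sub, map_pow, map_mul, eval_X, if_pos rfl] at h
  norm_num at h
  rw [show ((341 : ZMod 11)) = 0 by decide, zero_mul, neg_zero,
    sub_eq_zero] at h
  exact (by decide : ∀ a : ZMod 11, a ^ 2 ≠ 7) _ h
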